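/- arXiv:0907.1689 — 4 statements merged into one kernel-verified Lean document; each statement's English description precedes it below -/
import Mathlib

section
/- Let n > 1 be odd, x ∈ Φ(2n), y = α⁻¹(x) ∈ Φ(n) (i.e., y = x if x < n, else y = x - n), and z = β(y). Then Γ(x/(2n)) = ε(x) · 2√π · 2^(-x/n) · Γ(y/n) / Γ(z/n), where ε(x) = 1 if x < n and ε(x) = 2 if x > n. Moreover x - n = 2y - 2z and y ≡ 2z (mod n). -/
/-! Both identities are Legendre's duplication formula `Γ(s) Γ(s + 1/2) = 2^(1 - 2s) √π Γ(2s)`.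
Coprimality to `2n` makes `x` odd and different from `n`. If `x < n`, then `y = x` is odd,
`2z = x + n`, and the formula at `s = x/2n` gives the claim. If `x > n`, then `y = x - n` is even,
`2z = y`, and the formula at `s = z/n = x/2n - 1/2` gives it. -/

open Real

theorem Real.Gamma_eq_mul_rpow_mul_Gamma_two_mul_div (s : ℝ) (h : Gamma (s + 1 / 2) ≠ 0) :
    Gamma s = 2 * √π * 2 ^ (-(2 * s)) * Gamma (2 * s) / Gamma (s + 1 / 2) := by
  rw [eq_div_iff h, Gamma_mul_Gamma_add_half, sub_eq_add_neg, rpow_add two_pos, rpow_one]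
  ring

theorem Real.Gamma_eq_mul_rpow_mul_Gamma_two_mul_sub_one_div (t : ℝ) (h : Gamma (t - 1 / 2) ≠ 0) :
    Gamma t = 2 * (2 * √π) * 2 ^ (-(2 * t)) * Gamma (2 * t - 1) / Gamma (t - 1 / 2) := by
  have dup := Gamma_mul_Gamma_add_half (t - 1 / 2)
  rw [sub_add_cancel, show 1 - 2 * (t - 1 / 2) = 2 + -(2 * t) by ring, rpow_add two_pos] at dup
  rw [eq_div_iff h, mul_comm, dup, show 2 * (t - 1 / 2) = 2 * t - 1 by ring]
  norm_num
  ring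

theorem Real.Gamma_div_two_mul_of_two_mul_eq_add {n x z : ℕ} (hn : 0 < n) (h : 2 * z = x + n) :
    Gamma (x / (2 * n)) = 2 * √π * 2 ^ (-((x : ℝ) / n)) * Gamma (x / n) / Gamma (z / n) := by
  have hnR : (n : ℝ) ≠ 0 := by positivity
  have hR : (2 : ℝ) * z = x + n := by exact_mod_cast h
  have hzR : (z : ℝ) / n = x / (2 * n) + 1 / 2 := by field_simp; linarith
  rw [hzR, show (x : ℝ) / n = 2 * (x / (2 * n)) by field_simp]
  exact Gamma_eq_mul_rpow_mul_Gamma_two_mul_div _ (Gamma_pos_of_pos (by positivity)).ne'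

theorem Real.Gamma_div_two_mul_of_two_mul_eq_sub {n x y z : ℕ} (hn : 0 < n) (hx : y + n = x)
    (h : 2 * z = y) (hz : 0 < z) :
    Gamma (x / (2 * n)) = 2 * (2 * √π) * 2 ^ (-((x : ℝ) / n)) * Gamma (y / n) / Gamma (z / n) := by
  have hnR : (n : ℝ) ≠ 0 := by positivity
  have hxR : (y : ℝ) + n = x := by exact_mod_cast hx
  have hR : (2 : ℝ) * z = y := by exact_mod_cast h
  have hzR : (z : ℝ) / n = x / (2 * n) - 1 / 2 := by field_simp; linarith
  have hyR : (y : ℝ) / n = 2 * (x / (2 * n)) - 1 := by field_simp; linarith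
  rw [hzR, hyR, show (x : ℝ) / n = 2 * (x / (2 * n)) by field_simp]
  refine Gamma_eq_mul_rpow_mul_Gamma_two_mul_sub_one_div _ (Gamma_pos_of_pos ?_).ne'
  rw [← hzR]; positivity

theorem gamma_lemma_general (n x : ℕ) (hn : 1 < n) (hodd : Odd n)
    (hcop : Nat.gcd x (2 * n) = 1)
    (y z : ℕ) (hy : y = if x < n then x else x - n)
    (hz : z = if Even y then y / 2 else (y + n) / 2) :
    Real.Gamma (x / (2 * n)) =
      (if x < n then (1 : ℝ) else 2) * (2 * Real.sqrt Real.pi) *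
        (2 : ℝ) ^ (-((x : ℝ) / n)) * Real.Gamma (y / n) / Real.Gamma (z / n) ∧
      (x : ℤ) - n = 2 * y - 2 * z ∧ 2 * z ≡ y [MOD n] := by
  have hx : x % 2 = 1 := Nat.odd_iff.mp (Nat.Coprime.coprime_mul_right_right hcop).odd_of_right
  have hxn : x ≠ n := by
    rintro rfl
    exact hn.ne' (Nat.Coprime.eq_one_of_dvd hcop (dvd_mul_left _ _))
  have hn2 : n % 2 = 1 := Nat.odd_iff.mp hodd
  by_cases hlt : x < n
  · have hyx : y = x := by rw [hy, if_pos hlt]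
    have h2z : 2 * z = y + n := by rw [hz, if_neg (Nat.not_even_iff.mpr (by omega))]; omega
    rw [if_pos hlt, one_mul, ← hyx]
    exact ⟨Real.Gamma_div_two_mul_of_two_mul_eq_add (by omega) h2z, by omega,
      h2z ▸ Nat.add_modulus_modEq_iff.mpr rfl⟩
  · have hyx : y + n = x := by rw [hy, if_neg hlt]; omega
    have h2z : 2 * z = y := by rw [hz, if_pos (Nat.even_iff.mpr (by omega))]; omega
    rw [if_neg hlt]
    exact ⟨Real.Gamma_div_two_mul_of_two_mul_eq_sub (by omega) hyx h2z (by omega), by omega,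
      h2z ▸ rfl⟩

theorem gamma_lemma (n x : ℕ) (hn : 1 < n) (hodd : Odd n)
    (hx0 : 0 < x) (hx2n : x < 2 * n) (hcop : Nat.gcd x (2 * n) = 1)
    (y z : ℕ) (hy : y = if x < n then x else x - n)
    (hz : z = if Even y then y / 2 else (y + n) / 2) :
    Real.Gamma (x / (2 * n)) =
      (if x < n then (1 : ℝ) else 2) * (2 * Real.sqrt Real.pi) *
        (2 : ℝ) ^ (-((x : ℝ) / n)) * Real.Gamma (y / n) / Real.Gamma (z / n) ∧
      (x : ℤ) - n = 2 * y - 2 * z ∧ 2 * z ≡ y [MOD n] :=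
  gamma_lemma_general n x hn hodd hcop y z hy hz
end

section
/- Let n > 1 be odd and let A be a coset of the cyclic subgroup of (Z/2nZ)× generated by n + 2, with each element of A represented by its representative in (0, 2n). Then the sum of these representatives equals n·|A|. -/
/-!
Write `v x ∈ [0, 2n)` for the representative of `x`. Right multiplication by `u` permutes
the coset `A`, and `v (x * u) ≡ 2 * v x [MOD n]`. Splitting `v = n * (v / n) + v % n`, the
residues `r = v % n` are permuted by doubling modulo `n`, so `∑ r = n * ∑ 2 * r / n`. Since
`v` and `n` are odd, `v (x * u) / n + 2 * r x / n = 1` for every `x`, and summing over `A`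
gives `∑ v = n * |A|`.
-/

open scoped Pointwise
open Finset

theorem Subgroup.bijOn_mul_right_leftCoset {G : Type*} [Group G] {H : Subgroup G} {u : G}
    (hu : u ∈ H) (a : G) : Set.BijOn (· * u) (a • (H : Set G)) (a • (H : Set G)) := by
  refine ⟨fun x hx => ?_, (mul_left_injective u).injOn,
    fun y hy => ⟨y * u⁻¹, ?_, by simp⟩⟩
  · rw [mem_leftCoset_iff] at hx ⊢
    simpa only [mul_assoc, SetLike.mem_coe] using H.mul_mem hx hu
  · rw [mem_leftCoset_iff] at hy ⊢
    simpa only [mul_assoc, SetLike.mem_coe] using H.mul_mem hy (H.inv_mem hu)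

/-- `w - m` is an odd multiple of `n` in `(-2n, 2n)`, hence `± n`. -/
theorem Nat.div_add_div_eq_one_of_modEq {n w m : ℕ} (hn : Odd n) (hw : Odd w) (hm : Even m)
    (hw2 : w < 2 * n) (hm2 : m < 2 * n) (h : w ≡ m [MOD n]) : w / n + m / n = 1 := by
  have hw' := Nat.div_add_mod w n
  have hm' := Nat.div_add_mod m n
  have : w / n < 2 := Nat.div_lt_of_lt_mul (by rwa [mul_comm])
  have : m / n < 2 := Nat.div_lt_of_lt_mul (by rwa [mul_comm])
  rw [Nat.ModEq] at h
  rw [Nat.odd_iff] at hn hw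
  rw [Nat.even_iff] at hm
  interval_cases w / n <;> interval_cases m / n <;> omega

theorem ZMod.odd_val_coe_unit (n : ℕ) (x : (ZMod (2 * n))ˣ) : Odd (x : ZMod (2 * n)).val :=
  Nat.coprime_two_right.mp (ZMod.val_coe_unit_coprime x).coprime_mul_right_right

theorem ZMod.val_mul_modEq_two_mul {n : ℕ} [NeZero n] {y : ZMod (2 * n)} (hy : y = n + 2)
    (z : ZMod (2 * n)) : (z * y).val ≡ 2 * z.val [MOD n] := by
  rw [← ZMod.natCast_eq_natCast_iff, ZMod.natCast_val,
    ← ZMod.castHom_apply (h := dvd_mul_left n 2), map_mul, hy, map_add, map_natCast, map_ofNat,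
    ZMod.natCast_self, zero_add, ZMod.castHom_apply, ← ZMod.natCast_val]
  push_cast
  ring

section DoublingModN

variable {α : Type*} {s : Finset α} {g : α → α} {n : ℕ}

theorem Finset.sum_eq_mul_sum_div_of_eq_two_mul_mod (hg : Set.BijOn g s s) {r : α → ℕ}
    (hr : ∀ x ∈ s, r (g x) = 2 * r x % n) :
    ∑ x ∈ s, r x = n * ∑ x ∈ s, 2 * r x / n := by
  have hperm : ∑ x ∈ s, r (g x) = ∑ x ∈ s, r x :=
    sum_nbij g hg.mapsTo hg.injOn hg.surjOn fun _ _ => rfl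
  have h2 : 2 * ∑ x ∈ s, r x = ∑ x ∈ s, r (g x) + n * ∑ x ∈ s, 2 * r x / n := by
    rw [mul_sum, mul_sum, ← sum_add_distrib]
    exact sum_congr rfl fun x hx => by rw [hr x hx, Nat.mod_add_div]
  omega

theorem Finset.sum_eq_mul_card_of_modEq_two_mul (hn : Odd n) (hg : Set.BijOn g s s)
    {v : α → ℕ} (hodd : ∀ x ∈ s, Odd (v x)) (hlt : ∀ x ∈ s, v x < 2 * n)
    (hv : ∀ x ∈ s, v (g x) ≡ 2 * v x [MOD n]) : ∑ x ∈ s, v x = n * #s := by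
  have hpair : ∀ x ∈ s, v (g x) / n + 2 * (v x % n) / n = 1 := fun x hx =>
    Nat.div_add_div_eq_one_of_modEq hn (hodd _ (hg.mapsTo hx)) (even_two_mul _)
      (hlt _ (hg.mapsTo hx)) (by have := Nat.mod_lt (v x) hn.pos; omega)
      ((hv x hx).trans ((Nat.mod_modEq _ _).mul_left 2).symm)
  have hperm : ∑ x ∈ s, v (g x) / n = ∑ x ∈ s, v x / n :=
    sum_nbij g hg.mapsTo hg.injOn hg.surjOn fun _ _ => rfl
  have hmod : ∑ x ∈ s, v x % n = n * ∑ x ∈ s, 2 * (v x % n) / n :=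
    sum_eq_mul_sum_div_of_eq_two_mul_mod hg fun x hx => by rw [Nat.mul_mod_mod]; exact hv x hx
  calc ∑ x ∈ s, v x = ∑ x ∈ s, v x % n + n * ∑ x ∈ s, v x / n := by
        rw [mul_sum, ← sum_add_distrib]; exact sum_congr rfl fun x _ => (Nat.mod_add_div _ _).symm
    _ = n * ∑ x ∈ s, (v (g x) / n + 2 * (v x % n) / n) := by
        rw [hmod, ← hperm, sum_add_distrib]; ring
    _ = n * #s := by rw [sum_congr rfl hpair, card_eq_sum_ones]

end DoublingModN

theorem coset_sum_general (n : ℕ) (hodd : Odd n)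
    (u : (ZMod (2 * n))ˣ) (hu : (u : ZMod (2 * n)) = (n : ZMod (2 * n)) + 2)
    (a : (ZMod (2 * n))ˣ) :
    ∑ᶠ x ∈ a • ((Subgroup.zpowers u : Subgroup (ZMod (2 * n))ˣ) : Set (ZMod (2 * n))ˣ),
        ((x : ZMod (2 * n)).val) =
      n * Nat.card ↥(a • ((Subgroup.zpowers u : Subgroup (ZMod (2 * n))ˣ) : Set (ZMod (2 * n))ˣ)) := by
  have : NeZero n := ⟨hodd.pos.ne'⟩
  set A := a • ((Subgroup.zpowers u : Subgroup (ZMod (2 * n))ˣ) : Set (ZMod (2 * n))ˣ)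
  have hA : A.Finite := Set.toFinite A
  rw [finsum_mem_eq_finite_toFinset_sum _ hA, Nat.card_coe_set_eq,
    Set.ncard_eq_toFinset_card A hA]
  refine sum_eq_mul_card_of_modEq_two_mul hodd (g := (· * u)) ?_
    (fun x _ => ZMod.odd_val_coe_unit n x) (fun x _ => ZMod.val_lt _)
    (fun x _ => ZMod.val_mul_modEq_two_mul hu x)
  rw [hA.coe_toFinset]
  exact Subgroup.bijOn_mul_right_leftCoset (Subgroup.mem_zpowers u) a

theorem coset_sum (n : ℕ) (hn : 1 < n) (hodd : Odd n)
    (u : (ZMod (2 * n))ˣ) (hu : (u : ZMod (2 * n)) = (n : ZMod (2 * n)) + 2)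
    (a : (ZMod (2 * n))ˣ) :
    ∑ᶠ x ∈ a • ((Subgroup.zpowers u : Subgroup (ZMod (2 * n))ˣ) : Set (ZMod (2 * n))ˣ),
        ((x : ZMod (2 * n)).val) =
      n * Nat.card ↥(a • ((Subgroup.zpowers u : Subgroup (ZMod (2 * n))ˣ) : Set (ZMod (2 * n))ˣ)) :=
  coset_sum_general n hodd u hu a
end

section
/- Γ(1/62) · Γ(33/62) · Γ(35/62) · Γ(39/62) · Γ(47/62) = 2^4 · π^{5/2}. -/
/-!
Iterating the duplication formula `Γ(s) Γ(s + 1/2) = 2^(1 - 2s) √π Γ(2s)` along the orbit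
`s = 2^i / 62` (`i = 0, …, 4`) telescopes. Since `2^5 / 62 = 1/62 + 1/2`, the last value
`Γ(2^5 / 62)` equals the first factor `Γ(1/62 + 1/2)` and cancels; the numerators `31 + 2^i`
of the surviving `Γ(2^i / 62 + 1/2)`, `i = 1, …, 4`, are `33, 35, 39, 47`, the subgroup
generated by `33` in `(ℤ/62ℤ)ˣ`, and the accumulated power of `2` is `5 - 2 · 31/62 = 4`.
-/

open Real Finset

theorem Real.Gamma_mul_prod_Gamma_two_pow_mul_add_half (x : ℝ) (n : ℕ) :
    Gamma x * ∏ i ∈ range n, Gamma (2 ^ i * x + 1 / 2) =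
      Gamma (2 ^ n * x) * (2 : ℝ) ^ ((n : ℝ) - 2 * (2 ^ n - 1) * x) * √π ^ n := by
  induction n with
  | zero => simp
  | succ n ih =>
    have hdup := Gamma_mul_Gamma_add_half (2 ^ n * x)
    have hexp : (2 : ℝ) ^ (((n + 1 : ℕ) : ℝ) - 2 * (2 ^ (n + 1) - 1) * x) =
        2 ^ (1 - 2 * (2 ^ n * x)) * 2 ^ ((n : ℝ) - 2 * (2 ^ n - 1) * x) := by
      rw [← rpow_add two_pos]
      push_cast
      ring_nf
    rw [prod_range_succ, ← mul_assoc, ih, hexp, pow_succ', mul_assoc 2 (2 ^ n) x]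
    linear_combination (2 ^ ((n : ℝ) - 2 * (2 ^ n - 1) * x) * √π ^ n) * hdup

theorem gamma_product_62_subgroup :
    Real.Gamma (1 / 62) * Real.Gamma (33 / 62) * Real.Gamma (35 / 62) *
        Real.Gamma (39 / 62) * Real.Gamma (47 / 62) =
      2 ^ 4 * Real.pi ^ ((5 : ℝ) / 2) := by
  have htel := Gamma_mul_prod_Gamma_two_pow_mul_add_half (1 / 62) 5
  have hpow : √π ^ 5 = π ^ ((5 : ℝ) / 2) := by
    rw [sqrt_eq_rpow, ← rpow_natCast _ 5, ← rpow_mul pi_pos.le]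
    norm_num
  have hne : Gamma (16 / 31) ≠ 0 := (Gamma_pos_of_pos (by norm_num)).ne'
  simp only [prod_range_succ, prod_range_zero, hpow] at htel
  norm_num at htel
  apply mul_left_cancel₀ hne
  linear_combination htel
end

section
/- For n > 1 odd, ∏_{x ∈ Φ(2n)} Γ(x/(2n)) = (2π)^{φ(n)/2}, where Φ(2n) is the set of integers in (0,2n) coprime to 2n and φ is Euler's totient. -/
/-!
The reflection formula `Γ(s) Γ(1 - s) = π / sin (π s)`, applied to the pairs `x, m - x` of
residues coprime to `m`, gives `(∏ Γ(x/m))² = (2π)^φ(m) / ∏ 2 sin (π x / m)`. The denominator is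
`∏ |1 - ζ^x|` for a primitive `m`-th root of unity `ζ`, i.e. the absolute value of the `m`-th
cyclotomic polynomial at `1`, which is `1` as soon as `m` is not a prime power; `2n` with `n > 1` odd is such an `m`, and `φ(2n) = φ(n)`.
-/

open Finset Polynomial Real
open scoped Nat

theorem IsPrimitiveRoot.prod_primitiveRoots_eq_prod_pow_coprime {R M : Type*} [CommRing R]
    [IsDomain R] [CommMonoid M] {ζ : R} {k : ℕ} (h : IsPrimitiveRoot ζ k) (f : R → M) :
    ∏ μ ∈ primitiveRoots k R, f μ = ∏ i ∈ range k with i.Coprime k, f (ζ ^ i) := by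
  rcases k.eq_zero_or_pos with rfl | hk
  · simp
  have : NeZero k := ⟨hk.ne'⟩
  symm
  refine prod_bij (fun i _ ↦ ζ ^ i) ?_ ?_ ?_ (fun _ _ ↦ rfl)
  · rintro i hi
    rw [mem_primitiveRoots hk]
    exact h.pow_of_coprime i (mem_filter.1 hi).2
  · rintro i hi j hj H
    exact h.pow_inj (mem_range.1 (mem_filter.1 hi).1) (mem_range.1 (mem_filter.1 hj).1) H
  · intro μ hμ
    rw [mem_primitiveRoots hk, h.isPrimitiveRoot_iff] at hμ
    obtain ⟨i, hik, hi, rfl⟩ := hμ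
    exact ⟨i, mem_filter.2 ⟨mem_range.2 hik, hi⟩, rfl⟩

theorem IsPrimitiveRoot.eval_one_cyclotomic_eq_prod {K : Type*} [CommRing K] [IsDomain K]
    {ζ : K} {k : ℕ} (h : IsPrimitiveRoot ζ k) :
    eval 1 (cyclotomic k K) = ∏ i ∈ range k with i.Coprime k, (1 - ζ ^ i) := by
  rw [cyclotomic_eq_prod_X_sub_primitiveRoots h, eval_prod,
    h.prod_primitiveRoots_eq_prod_pow_coprime fun μ ↦ eval 1 (X - C μ)]
  simp only [eval_sub, eval_X, eval_C]

theorem prod_two_mul_sin_coprime_eq_norm_eval_one_cyclotomic {m : ℕ} (hm : m ≠ 0) :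
    ∏ x ∈ range m with x.Coprime m, 2 * sin (π * x / m) = ‖eval 1 (cyclotomic m ℂ)‖ := by
  rw [(Complex.isPrimitiveRoot_exp m hm).eval_one_cyclotomic_eq_prod, norm_prod]
  refine prod_congr rfl fun x hx ↦ ?_
  have hxm : (x : ℝ) ≤ m := by exact_mod_cast (mem_range.1 (mem_filter.1 hx).1).le
  have hsin : 0 ≤ sin (π * x / m) :=
    sin_nonneg_of_nonneg_of_le_pi (by positivity) <| by
      rw [mul_div_assoc]
      exact mul_le_of_le_one_right pi_pos.le (div_le_one_of_le₀ hxm m.cast_nonneg)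
  have hpow : Complex.exp (2 * π * Complex.I / m) ^ x =
      Complex.exp (Complex.I * ↑(2 * π * x / m)) := by
    rw [← Complex.exp_nat_mul]
    push_cast
    ring_nf
  rw [hpow, norm_sub_rev, Complex.norm_exp_I_mul_ofReal_sub_one, Real.norm_eq_abs,
    show 2 * π * x / m / 2 = π * x / m by ring, abs_of_nonneg (mul_nonneg zero_le_two hsin)]

theorem Nat.Coprime.pos_left_of_one_lt {x m : ℕ} (h : x.Coprime m) (hm : 1 < m) : 0 < x :=
  Nat.pos_of_ne_zero fun h0 ↦ by
    rw [h0, Nat.coprime_zero_left] at h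
    omega

theorem prod_coprime_comp_one_sub_div {M : Type*} [CommMonoid M] {m : ℕ} (hm : 1 < m)
    (f : ℝ → M) :
    ∏ x ∈ range m with x.Coprime m, f (1 - x / m) = ∏ x ∈ range m with x.Coprime m, f (x / m) := by
  have hle : ∀ x ∈ ({x ∈ range m | x.Coprime m} : Finset ℕ), x ≤ m :=
    fun x hx ↦ (mem_range.1 (mem_filter.1 hx).1).le
  have hmaps : ∀ x ∈ ({x ∈ range m | x.Coprime m} : Finset ℕ),
      m - x ∈ ({x ∈ range m | x.Coprime m} : Finset ℕ) := fun x hx ↦ by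
    have hcop := (mem_filter.1 hx).2
    have := hcop.pos_left_of_one_lt hm
    exact mem_filter.2 ⟨mem_range.2 (by omega), (Nat.coprime_self_sub_left (hle x hx)).2 hcop⟩
  refine prod_nbij' (m - ·) (m - ·) hmaps hmaps (fun x hx ↦ Nat.sub_sub_self (hle x hx))
    (fun x hx ↦ Nat.sub_sub_self (hle x hx)) fun x hx ↦ ?_
  rw [Nat.cast_sub (hle x hx), sub_div, div_self (by positivity)]

theorem sq_prod_Gamma_coprime {m : ℕ} (hm : 1 < m) :
    (∏ x ∈ range m with x.Coprime m, Gamma (x / m)) ^ 2 =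
      (2 * π) ^ φ m / ∏ x ∈ range m with x.Coprime m, 2 * sin (π * x / m) := by
  have hcard : #{x ∈ range m | x.Coprime m} = φ m := by
    rw [Nat.totient_eq_card_coprime]
    simp only [Nat.coprime_comm]
  calc (∏ x ∈ range m with x.Coprime m, Gamma (x / m)) ^ 2
      = ∏ x ∈ range m with x.Coprime m, Gamma (x / m) * Gamma (1 - x / m) := by
        rw [prod_mul_distrib, prod_coprime_comp_one_sub_div hm, sq]
    _ = ∏ x ∈ range m with x.Coprime m, 2 * π / (2 * sin (π * x / m)) := by
        refine prod_congr rfl fun x _ ↦ ?_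
        rw [Gamma_mul_Gamma_one_sub, mul_div_mul_left _ _ two_ne_zero, mul_div_assoc]
    _ = (2 * π) ^ φ m / ∏ x ∈ range m with x.Coprime m, 2 * sin (π * x / m) := by
        rw [prod_div_distrib, prod_const, hcard]

theorem prod_Gamma_coprime_of_ne_prime_pow {m : ℕ} (h : ∀ {p : ℕ}, p.Prime → ∀ k : ℕ, p ^ k ≠ m) :
    ∏ x ∈ range m with x.Coprime m, Gamma (x / m) = (2 * π) ^ ((φ m : ℝ) / 2) := by
  rcases le_or_gt m 1 with hm | hm
  · interval_cases m
    · simp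
    · exact absurd (pow_zero 2) (h Nat.prime_two 0)
  have hsq : (∏ x ∈ range m with x.Coprime m, Gamma (x / m)) ^ 2 = (2 * π) ^ φ m := by
    rw [sq_prod_Gamma_coprime hm, prod_two_mul_sin_coprime_eq_norm_eval_one_cyclotomic (by omega),
      eval_one_cyclotomic_not_prime_pow h, norm_one, div_one]
  have hprod_pos : 0 < ∏ x ∈ range m with x.Coprime m, Gamma (x / m) :=
    prod_pos fun x hx ↦
      have := (mem_filter.1 hx).2.pos_left_of_one_lt hm
      Gamma_pos_of_pos (by positivity)
  refine (pow_left_inj₀ hprod_pos.le (by positivity) two_ne_zero).1 ?_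
  rw [hsq, ← rpow_mul_natCast (by positivity), Nat.cast_two, div_mul_cancel₀ _ two_ne_zero,
    rpow_natCast]

theorem Nat.Prime.pow_ne_two_mul_of_odd {p n : ℕ} (hp : p.Prime) (hn : 1 < n) (hodd : Odd n)
    (k : ℕ) : p ^ k ≠ 2 * n := by
  intro h
  have hp2 : p = 2 :=
    ((Nat.prime_dvd_prime_iff_eq Nat.prime_two hp).1
      (Nat.prime_two.dvd_of_dvd_pow (h ▸ dvd_mul_right 2 n))).symm
  obtain ⟨j, -, rfl⟩ := (Nat.dvd_prime_pow hp).1 (h ▸ dvd_mul_left n 2)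
  subst hp2
  rcases j with _ | j
  · omega
  · exact Nat.not_even_iff_odd.2 hodd ⟨2 ^ j, by ring⟩

theorem full_product (n : ℕ) (hn : 1 < n) (hodd : Odd n) :
    ∏ x ∈ Finset.filter (fun x => Nat.Coprime x (2 * n)) (Finset.range (2 * n)),
        Real.Gamma ((x : ℝ) / (2 * n)) =
      (2 * Real.pi) ^ ((Nat.totient n : ℝ) / 2) := by
  have h := prod_Gamma_coprime_of_ne_prime_pow fun hp k ↦ hp.pow_ne_two_mul_of_odd hn hodd k
  rw [Nat.totient_two_mul_of_odd hodd] at h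
  exact_mod_cast h
end
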